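/- If P is a temporal beer path from x to y within [t_α, t_ω] through beer vertex b at active time t ∈ T_b, and Q' is a temporal x-b path with start(Q') ≥ start(Q) and end(Q') ≤ end(Q), where Q is the x-b prefix of P, then the concatenation of Q' with the b-y suffix of P (waiting at b) is a temporal beer path from x to y within [t_α, t_ω] through b at time t, with duration at most dura(P). -/

import Mathlib

open scoped Classical

structure TEdge (V : Type) where
  src : V
  dst : V
  t : ℝ
  len : ℝ

variable {V : Type}

/-- Consecutive compatibility of temporal edges. -/
def compat (e f : TEdge V) : Prop := e.dst = f.src ∧ e.t + e.len ≤ f.t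

/-- A temporal path from `x` to `y`: a nonempty list of temporal edges of `E`,
starting at `x`, ending at `y`, consecutively compatible. -/
def IsPath (E : Set (TEdge V)) (x y : V) (p : List (TEdge V)) : Prop :=
  p ≠ [] ∧ (∀ e ∈ p, e ∈ E) ∧ p.head?.map TEdge.src = some x ∧
    p.getLast?.map TEdge.dst = some y ∧ List.Chain' compat p

/-- Starting time of a temporal path. -/
def startT (p : List (TEdge V)) : ℝ := ((p.head?).map TEdge.t).getD 0

/-- Ending (arrival) time of a temporal path. -/
def endT (p : List (TEdge V)) : ℝ := ((p.getLast?).map (fun e => e.t + e.len)).getD 0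

/-- Distance (sum of traversal times) of a temporal path. -/
def distT (p : List (TEdge V)) : ℝ := (p.map TEdge.len).sum

/-- `p = q ++ r` witnesses a visit of beer vertex `b` at time `t`:
`b` is the endpoint of `q` (or the source `x` if `q` is empty), `t` is no
earlier than the arrival of the last edge of `q` and no later than the
departure of the first edge of `r`. -/
def BeerSplit (x b : V) (t : ℝ) (p q r : List (TEdge V)) : Prop :=
  p = q ++ r ∧ ((q.getLast?).map TEdge.dst).getD x = b ∧
    (∀ e ∈ q.getLast?, e.t + e.len ≤ t) ∧ (∀ e ∈ r.head?, t ≤ e.t)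

/-- A temporal beer path from `x` to `y`: a temporal path visiting some active
beer vertex `b ∈ B` at some time `t ∈ T b` between the arrival at `b` and the
departure from `b`. -/
def IsBeerPath (E : Set (TEdge V)) (B : Set V) (T : V → Set ℝ) (x y : V)
    (p : List (TEdge V)) : Prop :=
  IsPath E x y p ∧ ∃ b ∈ B, ∃ t ∈ T b, ∃ q r, BeerSplit x b t p q r

/-- The path `p` starts no earlier than `tα` and ends no later than `tω`. -/
def InWin (tα tω : ℝ) (p : List (TEdge V)) : Prop :=
  tα ≤ startT p ∧ endT p ≤ tω

/-! Replacing the prefix `q` of `p = q ++ r` by a path `Q'` with the same endpoints that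
starts no earlier and arrives no later keeps every edge of `r` catchable: the walk can
wait at `b` until the beer time `t` and leave by the first edge of `r` as before. Hence the
result is again a beer path in the window, and its duration can only shrink. -/

section TemporalPath

variable {E : Set (TEdge V)} {x y b : V} {t : ℝ}

lemma startT_eq_of_mem_head? {p : List (TEdge V)} {f : TEdge V} (hf : f ∈ p.head?) :
    startT p = f.t := by
  simp [startT, Option.mem_def.mp hf]

lemma startT_append_of_ne_nil {p : List (TEdge V)} (r : List (TEdge V)) (hp : p ≠ []) :
    startT (p ++ r) = startT p := by
  simp only [startT, List.head?_append_of_ne_nil _ hp]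

lemma endT_append_of_ne_nil (p : List (TEdge V)) {r : List (TEdge V)} (hr : r ≠ []) :
    endT (p ++ r) = endT r := by
  simp only [endT, List.getLast?_append_of_ne_nil _ hr]

lemma endT_append_le_endT_append {p q : List (TEdge V)} (r : List (TEdge V))
    (h : endT p ≤ endT q) : endT (p ++ r) ≤ endT (q ++ r) := by
  rcases eq_or_ne r [] with rfl | hr
  · simpa using h
  · rw [endT_append_of_ne_nil _ hr, endT_append_of_ne_nil _ hr]

lemma endT_le_iff {p : List (TEdge V)} (hp : p ≠ []) :
    endT p ≤ t ↔ ∀ e ∈ p.getLast?, e.t + e.len ≤ t := by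
  obtain ⟨e, he⟩ := Option.isSome_iff_exists.mp (List.getLast?_isSome.mpr hp)
  simp [endT, he]

lemma IsPath.ne_nil {p : List (TEdge V)} (hp : IsPath E x y p) : p ≠ [] := hp.1

lemma IsPath.of_append_right {q r : List (TEdge V)} (hp : IsPath E x y (q ++ r))
    (hq : q.getLast?.map TEdge.dst = some b) (hr : r ≠ []) : IsPath E b y r := by
  obtain ⟨-, hE, -, hlast, hchain⟩ := hp
  obtain ⟨-, hrchain, hqr⟩ := List.isChain_append.mp hchain
  obtain ⟨e, he⟩ := Option.map_eq_some_iff.mp hq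
  obtain ⟨f, hf⟩ := Option.isSome_iff_exists.mp (List.isSome_head?.mpr hr)
  refine ⟨hr, fun g hg => hE g (List.mem_append_right q hg), ?_, ?_, hrchain⟩
  · rw [hf, Option.map_some, ← (hqr e he.1 f hf).1, he.2]
  · rwa [List.getLast?_append_of_ne_nil _ hr] at hlast

lemma IsPath.append {Q R : List (TEdge V)} (hQ : IsPath E x b Q) (hR : IsPath E b y R)
    (h : endT Q ≤ startT R) : IsPath E x y (Q ++ R) := by
  obtain ⟨hQne, hQE, hQhead, hQlast, hQchain⟩ := hQ
  obtain ⟨hRne, hRE, hRhead, hRlast, hRchain⟩ := hR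
  refine ⟨by simp [hQne], ?_, ?_, ?_, List.isChain_append.mpr ⟨hQchain, hRchain, ?_⟩⟩
  · simpa [or_imp, forall_and] using And.intro hQE hRE
  · rwa [List.head?_append_of_ne_nil _ hQne]
  · rwa [List.getLast?_append_of_ne_nil _ hRne]
  · intro e he f hf
    rw [Option.mem_def] at he hf
    simp only [endT, startT, he, hf, Option.map_some, Option.some.injEq, Option.getD_some]
      at hQlast hRhead h
    exact ⟨hQlast.trans hRhead.symm, h⟩

lemma IsPath.replace_prefix {q r Q : List (TEdge V)} (hp : IsPath E x y (q ++ r))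
    (hq : q.getLast?.map TEdge.dst = some b) (hQ : IsPath E x b Q)
    (hdep : ∀ f ∈ r.head?, endT Q ≤ f.t) : IsPath E x y (Q ++ r) := by
  rcases eq_or_ne r [] with rfl | hr
  · obtain rfl : y = b := by
      simpa [hq] using hp.2.2.2.1.symm
    simpa using hQ
  · obtain ⟨f, hf⟩ := Option.isSome_iff_exists.mp (List.isSome_head?.mpr hr)
    exact hQ.append (hp.of_append_right hq hr) (startT_eq_of_mem_head? hf ▸ hdep f hf)

lemma IsPath.beerSplit_append {Q r : List (TEdge V)} (hQ : IsPath E x b Q) (harr : endT Q ≤ t)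
    (hdep : ∀ f ∈ r.head?, t ≤ f.t) : BeerSplit x b t (Q ++ r) Q r :=
  ⟨rfl, by simp [hQ.2.2.2.1], (endT_le_iff hQ.ne_nil).mp harr, hdep⟩

end TemporalPath

theorem stmt15_general (E : Set (TEdge V)) (B : Set V) (T : V → Set ℝ)
    (x y b : V) (t tα tω : ℝ) (p q r Q' : List (TEdge V))
    (hb : b ∈ B) (ht : t ∈ T b)
    (hp : IsPath E x y p) (hwin : InWin tα tω p)
    (hsplit : p = q ++ r)
    (hqb : q.getLast?.map TEdge.dst = some b)
    (harr : ∀ e ∈ q.getLast?, e.t + e.len ≤ t)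
    (hdep : ∀ e ∈ r.head?, t ≤ e.t)
    (hQ' : IsPath E x b Q')
    (hs : startT q ≤ startT Q') (hend : endT Q' ≤ endT q) :
    IsBeerPath E B T x y (Q' ++ r) ∧ InWin tα tω (Q' ++ r) ∧
    BeerSplit x b t (Q' ++ r) Q' r ∧
    endT (Q' ++ r) - startT (Q' ++ r) ≤ endT p - startT p := by
  subst hsplit
  have hq : q ≠ [] := by
    rintro rfl
    simp at hqb
  have hQ't : endT Q' ≤ t := hend.trans ((endT_le_iff hq).mpr harr)
  have hpath := hp.replace_prefix hqb hQ' fun f hf => hQ't.trans (hdep f hf)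
  have hvisit := hQ'.beerSplit_append hQ't hdep
  have hstart : startT (q ++ r) ≤ startT (Q' ++ r) := by
    rwa [startT_append_of_ne_nil r hq, startT_append_of_ne_nil r hQ'.ne_nil]
  have hfinish := endT_append_le_endT_append r hend
  exact ⟨⟨hpath, b, hb, t, ht, Q', r, hvisit⟩, ⟨hwin.1.trans hstart, hfinish.trans hwin.2⟩,
    hvisit, by linarith⟩

/-- Exchange lemma for fastest beer paths: if `p = q ++ r` is a temporal beer
path from `x` to `y` within `[tα, tω]` through beer vertex `b` at active time
`t`, and `Q'` is a temporal `x`-`b` path with `startT q ≤ startT Q'` and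
`endT Q' ≤ endT q`, then `Q' ++ r` is a temporal beer path from `x` to `y`
within `[tα, tω]` through `b` at time `t`, with duration at most that of `p`. -/
theorem stmt15 (E : Set (TEdge V)) (B : Set V) (T : V → Set ℝ)
    (x y b : V) (t tα tω : ℝ) (p q r Q' : List (TEdge V))
    (hb : b ∈ B) (ht : t ∈ T b)
    (hp : IsPath E x y p) (hwin : InWin tα tω p)
    (hsplit : p = q ++ r) (hqne : q ≠ [])
    (hqb : q.getLast?.map TEdge.dst = some b)
    (harr : ∀ e ∈ q.getLast?, e.t + e.len ≤ t)
    (hdep : ∀ e ∈ r.head?, t ≤ e.t)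
    (hQ' : IsPath E x b Q')
    (hs : startT q ≤ startT Q') (hend : endT Q' ≤ endT q) :
    IsBeerPath E B T x y (Q' ++ r) ∧ InWin tα tω (Q' ++ r) ∧
    BeerSplit x b t (Q' ++ r) Q' r ∧
    endT (Q' ++ r) - startT (Q' ++ r) ≤ endT p - startT p :=
  stmt15_general E B T x y b t tα tω p q r Q' hb ht hp hwin hsplit hqb harr hdep hQ' hs hend
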